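/- Let A_0 = (1/√6)·[[2,0],[0,1],[0,1],[0,0]] and A_1 = (1/√6)·[[0,0],[1,0],[1,0],[0,2]] be 4×2 complex matrices. Then A_0*A_0 + A_1*A_1 = I_2, and for every unit vector |ψ⟩ ∈ ℂ² it holds that ⟨ψ ⊗ ψ| (A_0 |ψ⟩⟨ψ| A_0* + A_1 |ψ⟩⟨ψ| A_1*) |ψ ⊗ ψ⟩ = 2/3, where ℂ⁴ is identified with ℂ²⊗ℂ². -/

import Mathlib

/-!
For the pure input `ρ = |ψ⟩⟨ψ|` each Kraus term contributes `|⟨ψ ⊗ ψ| Bₖ |ψ⟩|²`, and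
`⟨ψ ⊗ ψ| Bₖ |ψ⟩ = (2/√6) ‖ψ‖² ψ̄ₖ`. Summing over `k` gives `(4/6) ‖ψ‖⁶`.
-/

open Matrix

/-- Tensor product `u ⊗ v ∈ ℂ⁴` of two qubit vectors, with respect to the basis
ordering `|00⟩, |01⟩, |10⟩, |11⟩`. -/
def tens4 (u v : Fin 2 → ℂ) : Fin 4 → ℂ :=
  ![u 0 * v 0, u 0 * v 1, u 1 * v 0, u 1 * v 1]

/-- The first Kraus operator of the Bužek–Hillery universal qubit cloner. -/
noncomputable def B₀ : Matrix (Fin 4) (Fin 2) ℂ :=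
  (Real.sqrt 6 : ℂ)⁻¹ • !![2, 0; 0, 1; 0, 1; 0, 0]

/-- The second Kraus operator of the Bužek–Hillery universal qubit cloner. -/
noncomputable def B₁ : Matrix (Fin 4) (Fin 2) ℂ :=
  (Real.sqrt 6 : ℂ)⁻¹ • !![0, 0; 1, 0; 1, 0; 0, 2]

theorem dotProduct_mul_vecMulVec_mul_mulVec {R k l m n : Type*} [CommSemiring R]
    [Fintype m] [Fintype n] [Fintype k] [Fintype l]
    (w : m → R) (A : Matrix m n R) (u : n → R) (v : k → R) (B : Matrix k l R) (x : l → R) :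
    w ⬝ᵥ (A * vecMulVec u v * B) *ᵥ x = (w ⬝ᵥ A *ᵥ u) * (v ⬝ᵥ B *ᵥ x) := by
  rw [mul_vecMulVec, vecMulVec_mul, dotProduct_mulVec, vecMul_vecMulVec, smul_dotProduct,
    smul_eq_mul, dotProduct_mulVec v]

theorem star_dotProduct_mul_vecMulVec_star_mul_conjTranspose_mulVec {R m n : Type*}
    [CommSemiring R] [StarRing R] [Fintype m] [Fintype n]
    (w : m → R) (A : Matrix m n R) (v : n → R) :
    star w ⬝ᵥ (A * vecMulVec v (star v) * Aᴴ) *ᵥ w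
      = star (star w ⬝ᵥ A *ᵥ v) * (star w ⬝ᵥ A *ᵥ v) := by
  rw [dotProduct_mul_vecMulVec_mul_mulVec, mul_comm, star_dotProduct, star_mulVec,
    conjTranspose_conjTranspose, dotProduct_mulVec]

lemma star_inv_sqrt_six : star ((Real.sqrt 6 : ℂ)⁻¹) = (Real.sqrt 6 : ℂ)⁻¹ := by
  simp [Complex.conj_ofReal]

lemma inv_sqrt_six_mul_self : (Real.sqrt 6 : ℂ)⁻¹ * (Real.sqrt 6 : ℂ)⁻¹ = 6⁻¹ := by
  rw [← mul_inv, ← Complex.ofReal_mul, Real.mul_self_sqrt (by norm_num)]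
  norm_num

theorem conjTranspose_B₀_mul_B₀_add_conjTranspose_B₁_mul_B₁ : B₀ᴴ * B₀ + B₁ᴴ * B₁ = 1 := by
  have hgram : (!![2, 0; 0, 1; 0, 1; 0, 0] : Matrix (Fin 4) (Fin 2) ℂ)ᴴ
        * (!![2, 0; 0, 1; 0, 1; 0, 0] : Matrix (Fin 4) (Fin 2) ℂ)
      + (!![0, 0; 1, 0; 1, 0; 0, 2] : Matrix (Fin 4) (Fin 2) ℂ)ᴴ
        * (!![0, 0; 1, 0; 1, 0; 0, 2] : Matrix (Fin 4) (Fin 2) ℂ)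
      = (6 : ℂ) • 1 := by
    ext i j
    fin_cases i <;> fin_cases j <;> norm_num [mul_apply, Fin.sum_univ_succ, map_ofNat]
  simp only [B₀, B₁, conjTranspose_smul, Matrix.smul_mul, Matrix.mul_smul, smul_smul,
    star_inv_sqrt_six, inv_sqrt_six_mul_self, ← smul_add]
  rw [hgram, smul_smul, inv_mul_cancel₀ (by norm_num), one_smul]

theorem star_tens4_dotProduct_B₀_mulVec (ψ : Fin 2 → ℂ) :
    star (tens4 ψ ψ) ⬝ᵥ B₀ *ᵥ ψ = 2 * (Real.sqrt 6 : ℂ)⁻¹ * (star ψ ⬝ᵥ ψ) * star ψ 0 := by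
  simp only [B₀, tens4, dotProduct, mulVec, Fin.sum_univ_two, Fin.sum_univ_four,
    Pi.star_apply, Matrix.smul_apply, of_apply, cons_val, star_mul', smul_eq_mul, mul_zero,
    zero_mul, mul_one, add_zero]
  ring

theorem star_tens4_dotProduct_B₁_mulVec (ψ : Fin 2 → ℂ) :
    star (tens4 ψ ψ) ⬝ᵥ B₁ *ᵥ ψ = 2 * (Real.sqrt 6 : ℂ)⁻¹ * (star ψ ⬝ᵥ ψ) * star ψ 1 := by
  simp only [B₁, tens4, dotProduct, mulVec, Fin.sum_univ_two, Fin.sum_univ_four,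
    Pi.star_apply, Matrix.smul_apply, of_apply, cons_val, star_mul', smul_eq_mul, mul_zero,
    zero_mul, mul_one, add_zero]
  ring

theorem star_tens4_dotProduct_cloner_mulVec (ψ : Fin 2 → ℂ) :
    star (tens4 ψ ψ) ⬝ᵥ
        (B₀ * vecMulVec ψ (star ψ) * B₀ᴴ + B₁ * vecMulVec ψ (star ψ) * B₁ᴴ) *ᵥ tens4 ψ ψ
      = 2 / 3 * (star ψ ⬝ᵥ ψ) ^ 3 := by
  have hnorm : star ψ ⬝ᵥ ψ = star (ψ 0) * ψ 0 + star (ψ 1) * ψ 1 := by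
    simp only [dotProduct, Fin.sum_univ_two, Pi.star_apply]
  have hnorm_star : star (star ψ ⬝ᵥ ψ) = star ψ ⬝ᵥ ψ := (star_dotProduct ψ ψ).symm
  rw [add_mulVec, dotProduct_add, star_dotProduct_mul_vecMulVec_star_mul_conjTranspose_mulVec,
    star_dotProduct_mul_vecMulVec_star_mul_conjTranspose_mulVec,
    star_tens4_dotProduct_B₀_mulVec, star_tens4_dotProduct_B₁_mulVec]
  simp only [star_mul', star_ofNat, star_inv_sqrt_six, hnorm_star, Pi.star_apply, star_star]
  linear_combination
    (-4 * ((Real.sqrt 6 : ℂ)⁻¹) ^ 2 * (star ψ ⬝ᵥ ψ) ^ 2) * hnorm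
      + 4 * (star ψ ⬝ᵥ ψ) ^ 3 * inv_sqrt_six_mul_self

/-- The Bužek–Hillery Kraus operators satisfy `B₀*B₀ + B₁*B₁ = I`, and the resulting
channel `ρ ↦ B₀ ρ B₀* + B₁ ρ B₁*` clones every unit vector `|ψ⟩ ∈ ℂ²` with success
probability `⟨ψ ⊗ ψ| Φ(|ψ⟩⟨ψ|) |ψ ⊗ ψ⟩` exactly `2/3`. -/
theorem buzek_hillery_cloner :
    B₀ᴴ * B₀ + B₁ᴴ * B₁ = 1 ∧
    ∀ ψ : Fin 2 → ℂ, star ψ ⬝ᵥ ψ = 1 →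
      star (tens4 ψ ψ) ⬝ᵥ
        (B₀ * vecMulVec ψ (star ψ) * B₀ᴴ +
         B₁ * vecMulVec ψ (star ψ) * B₁ᴴ).mulVec (tens4 ψ ψ) = (2 / 3 : ℂ) := by
  refine ⟨conjTranspose_B₀_mul_B₀_add_conjTranspose_B₁_mul_B₁, fun ψ hψ => ?_⟩
  rw [star_tens4_dotProduct_cloner_mulVec, hψ]
  norm_num
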